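/- arXiv:2007.09173 — 3 statements merged into one kernel-verified Lean document; each statement's English description precedes it below -/
import Mathlib

section
/- Let (X, ρ) be a metric space, λ ∈ Δ∞, and x = (x_k)_{k∈ℕ} a sequence in X. Then x is λ-statistically convergent to L ∈ X if and only if there exists a set G = {q_1 < q_2 < q_3 < ...} ⊆ ℕ with λ-density d_λ(G) = 1 such that the subsequence (x_{q_n})_{n∈ℕ} converges to L in the metric topology. (This is the paper's Theorem 3.4, specialized to the PM space induced by a metric, where F_{xy} = ε_{ρ(x,y)} and the strong topology is the metric topology.) -/
open Filter Topology

/-- `l` belongs to the class `Δ∞`: a nondecreasing (for indices `≥ 1`) sequence of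
positive reals tending to `∞` with `l 1 = 1` and `l (n+1) ≤ l n + 1`. -/
def DeltaInfty (l : ℕ → ℝ) : Prop :=
  (∀ n, 1 ≤ n → 0 < l n) ∧ (∀ m n, 1 ≤ m → m ≤ n → l m ≤ l n) ∧
    Tendsto l atTop atTop ∧ l 1 = 1 ∧ ∀ n, 1 ≤ n → l (n + 1) ≤ l n + 1

open Classical in
/-- The number of elements of `M` in the window `I_n = [n - l n + 1, n] ∩ ℕ`. -/
noncomputable def lamCount (l : ℕ → ℝ) (M : Set ℕ) (n : ℕ) : ℕ :=
  ((Finset.Icc 1 n).filter (fun (k : ℕ) => ((n : ℝ) - l n + 1 ≤ (k : ℝ)) ∧ k ∈ M)).card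

/-- `M ⊆ ℕ` has `λ`-density `r`: `|{k ∈ I_n : k ∈ M}| / l n → r`. -/
def lamDensity (l : ℕ → ℝ) (M : Set ℕ) (r : ℝ) : Prop :=
  Tendsto (fun n => (lamCount l M n : ℝ) / l n) atTop (𝓝 r)

/-- `x` is `λ`-statistically convergent to `L` in the metric space `X`. -/
def LamStatConv {X : Type*} [MetricSpace X] (l : ℕ → ℝ) (x : ℕ → X) (L : X) : Prop :=
  ∀ ε > 0, lamDensity l {k | ε ≤ dist (x k) L} 0


/-! If `x` is `λ`-statistically convergent to `L`, each exceptional set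
`A j = {k | 1/(j+1) ≤ ρ(x_k, L)}` has `λ`-density zero. A diagonal choice of a slowly growing
stage `s n` keeps the relative count of `A (s n)` in the window `I_n` tending to zero; the set
`G = {m | ρ(x_m, L) < 1/(s m + 1)}` then has `λ`-density one, because its complement meets `I_n`
inside `A (s n)`, and `x` converges to `L` along `G`. Conversely, if `x ∘ q → L` then the
exceptional set `{k | ε ≤ ρ(x_k, L)}` lies in the complement of the range of `q` together with the
images of finitely many indices, both of `λ`-density zero. -/

theorem exists_monotone_tendsto_diag {α : Type*} [PseudoMetricSpace α] {f : ℕ → ℕ → α} {a : α}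
    (hf : ∀ j, Tendsto (f j) atTop (𝓝 a)) :
    ∃ s : ℕ → ℕ, Monotone s ∧ Tendsto s atTop atTop ∧
      Tendsto (fun n => f (s n) n) atTop (𝓝 a) := by
  choose T hT using fun j => Metric.tendsto_atTop.1 (hf j) _ (Nat.one_div_pos_of_nat (n := j))
  -- `s n` is the last stage `j ≤ n` whose threshold `T j` has been passed at time `n`.
  let s : ℕ → ℕ := fun n => Nat.findGreatest (fun j => T j ≤ n) n
  have hs_top : Tendsto s atTop atTop := tendsto_atTop_atTop.2 fun j =>
    ⟨max j (T j), fun n hn => Nat.le_findGreatest (le_of_max_le_left hn) (le_of_max_le_right hn)⟩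
  refine ⟨s, fun m n hmn => Nat.findGreatest_mono (fun j hj => hj.trans hmn) hmn, hs_top, ?_⟩
  rw [tendsto_iff_dist_tendsto_zero]
  refine squeeze_zero' (.of_forall fun _ => dist_nonneg) ?_
    (tendsto_one_div_add_atTop_nhds_zero_nat.comp hs_top)
  filter_upwards [eventually_ge_atTop (T 0)] with n hn
  exact (hT _ n (Nat.findGreatest_spec (P := fun j => T j ≤ n) n.zero_le hn)).le

section lamCount

variable {l : ℕ → ℝ} {M N : Set ℕ} {n : ℕ}

theorem lamCount_le_of_inter_Iic_subset (h : M ∩ Set.Iic n ⊆ N) :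
    lamCount l M n ≤ lamCount l N n := by
  refine Finset.card_le_card fun k hk => ?_
  simp only [Finset.mem_filter, Finset.mem_Icc] at hk ⊢
  exact ⟨hk.1, hk.2.1, h ⟨hk.2.2, hk.1.2⟩⟩

theorem lamCount_mono (h : M ⊆ N) : lamCount l M n ≤ lamCount l N n :=
  lamCount_le_of_inter_Iic_subset (Set.inter_subset_left.trans h)

theorem lamCount_union_le : lamCount l (M ∪ N) n ≤ lamCount l M n + lamCount l N n := by
  refine (Finset.card_le_card fun k hk => ?_).trans (Finset.card_union_le _ _)
  simp only [Finset.mem_filter, Finset.mem_union, Set.mem_union] at hk ⊢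
  tauto

theorem lamCount_add_lamCount_compl :
    lamCount l M n + lamCount l Mᶜ n = lamCount l Set.univ n := by
  classical
  simp only [lamCount, Set.mem_compl_iff, Set.mem_univ, and_true]
  rw [← Finset.filter_filter, ← Finset.filter_filter]
  exact Finset.card_filter_add_card_filter_not _

theorem lamCount_le_card_of_finite (hM : M.Finite) : lamCount l M n ≤ hM.toFinset.card := by
  classical
  exact Finset.card_le_card fun _ hk => hM.mem_toFinset.2 (Finset.mem_filter.1 hk).2.2

theorem lamCount_univ_eq_floor (h0 : 0 ≤ l n) (hn : l n ≤ n) :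
    lamCount l Set.univ n = ⌊l n⌋₊ := by
  have hfloor : ⌊l n⌋₊ ≤ n := Nat.floor_le_of_le hn
  have hwindow : ∀ k ≤ n, ((n : ℝ) - l n + 1 ≤ k ↔ n + 1 - k ≤ ⌊l n⌋₊) := fun k hk => by
    rw [Nat.le_floor_iff h0]
    push_cast [Nat.cast_sub (show k ≤ n + 1 by omega)]
    constructor <;> intro <;> linarith
  calc lamCount l Set.univ n = (Finset.Icc (n + 1 - ⌊l n⌋₊) n).card := by
        unfold lamCount
        congr 1
        ext k
        simp only [Finset.mem_filter, Finset.mem_Icc, Set.mem_univ, and_true]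
        constructor
        · rintro ⟨⟨-, hkn⟩, hk⟩
          have := (hwindow k hkn).1 hk
          omega
        · rintro ⟨hk, hkn⟩
          exact ⟨⟨by omega, hkn⟩, (hwindow k hkn).2 (by omega)⟩
    _ = ⌊l n⌋₊ := by
      rw [Nat.card_Icc]
      omega

end lamCount

section lamDensity

variable {l : ℕ → ℝ} {M N : Set ℕ}

theorem lamDensity_zero_of_le (hl : Tendsto l atTop atTop) {u : ℕ → ℝ}
    (hu : Tendsto u atTop (𝓝 0)) (h : ∀ᶠ n in atTop, (lamCount l M n : ℝ) / l n ≤ u n) :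
    lamDensity l M 0 := by
  refine tendsto_of_tendsto_of_tendsto_of_le_of_le' tendsto_const_nhds hu ?_ h
  filter_upwards [hl.eventually_ge_atTop 0] with n hn
  positivity

theorem lamDensity_zero_of_finite (hl : Tendsto l atTop atTop) (hM : M.Finite) :
    lamDensity l M 0 := by
  refine lamDensity_zero_of_le hl (u := fun n => (hM.toFinset.card : ℝ) / l n)
    (tendsto_const_nhds.div_atTop hl) ?_
  filter_upwards [hl.eventually_ge_atTop 0] with n hn
  exact div_le_div_of_nonneg_right (by exact_mod_cast lamCount_le_card_of_finite hM) hn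

theorem lamDensity_zero_mono (hl : Tendsto l atTop atTop) (hN : lamDensity l N 0) (h : M ⊆ N) :
    lamDensity l M 0 := by
  refine lamDensity_zero_of_le hl hN ?_
  filter_upwards [hl.eventually_ge_atTop 0] with n hn
  exact div_le_div_of_nonneg_right (by exact_mod_cast lamCount_mono h) hn

theorem lamDensity_zero_union (hl : Tendsto l atTop atTop) (hM : lamDensity l M 0)
    (hN : lamDensity l N 0) : lamDensity l (M ∪ N) 0 := by
  refine lamDensity_zero_of_le hl (by simpa using hM.add hN) ?_
  filter_upwards [hl.eventually_ge_atTop 0] with n hn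
  rw [← add_div]
  exact div_le_div_of_nonneg_right (by exact_mod_cast lamCount_union_le) hn

theorem infinite_of_lamDensity_one (hl : Tendsto l atTop atTop) (hM : lamDensity l M 1) :
    M.Infinite := fun hfin =>
  zero_ne_one (tendsto_nhds_unique (lamDensity_zero_of_finite hl hfin) hM)

theorem lamDensity_compl (huniv : lamDensity l Set.univ 1) {r : ℝ} (hM : lamDensity l M r) :
    lamDensity l Mᶜ (1 - r) :=
  (huniv.sub hM).congr fun n => by
    rw [← lamCount_add_lamCount_compl (M := M)]
    push_cast
    ring

end lamDensity

namespace DeltaInfty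

variable {l : ℕ → ℝ}

theorem apply_le (hl : DeltaInfty l) {n : ℕ} (hn : 1 ≤ n) : l n ≤ n := by
  obtain ⟨-, -, -, hl_one, hl_succ⟩ := hl
  induction n, hn using Nat.le_induction with
  | base => simp [hl_one]
  | succ n hn ih =>
    push_cast
    linarith [hl_succ n hn]

theorem lamDensity_univ (hl : DeltaInfty l) : lamDensity l Set.univ 1 := by
  refine (tendsto_nat_floor_div_atTop.comp hl.2.2.1).congr' ?_
  filter_upwards [eventually_ge_atTop 1] with n hn
  simp [lamCount_univ_eq_floor (hl.1 n hn).le (hl.apply_le hn)]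

end DeltaInfty

section LamStatConv

variable {X : Type*} [MetricSpace X] {l : ℕ → ℝ} {x : ℕ → X} {L : X}

theorem LamStatConv.exists_lamDensity_one (hl : DeltaInfty l) (h : LamStatConv l x L) :
    ∃ ε : ℕ → ℝ, Tendsto ε atTop (𝓝 0) ∧ lamDensity l {m | dist (x m) L < ε m} 1 := by
  have htop : Tendsto l atTop atTop := hl.2.2.1
  obtain ⟨s, hs_mono, hs_top, hs⟩ :=
    exists_monotone_tendsto_diag fun j => h (1 / ((j : ℝ) + 1)) Nat.one_div_pos_of_nat
  refine ⟨fun m => 1 / ((s m : ℝ) + 1), tendsto_one_div_add_atTop_nhds_zero_nat.comp hs_top, ?_⟩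
  have hcompl : lamDensity l {m | dist (x m) L < 1 / ((s m : ℝ) + 1)}ᶜ 0 := by
    refine lamDensity_zero_of_le htop hs ?_
    filter_upwards [htop.eventually_ge_atTop 0] with n hn
    refine div_le_div_of_nonneg_right (Nat.cast_le.2 (lamCount_le_of_inter_Iic_subset ?_)) hn
    rintro m ⟨hm, hmn : m ≤ n⟩
    have hsmn : 1 / ((s n : ℝ) + 1) ≤ 1 / ((s m : ℝ) + 1) := by
      gcongr
      exact hs_mono hmn
    exact hsmn.trans (not_lt.1 hm)
  simpa using lamDensity_compl hl.lamDensity_univ hcompl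

theorem lamStatConv_of_tendsto_comp (hl : DeltaInfty l) {q : ℕ → ℕ}
    (hq : lamDensity l (Set.range q) 1) (hx : Tendsto (x ∘ q) atTop (𝓝 L)) :
    LamStatConv l x L := by
  have htop : Tendsto l atTop atTop := hl.2.2.1
  intro ε hε
  have hfin : {m | ε ≤ dist (x (q m)) L}.Finite := by
    have := Metric.tendsto_nhds.1 hx ε hε
    rw [← Nat.cofinite_eq_atTop, eventually_cofinite] at this
    simpa using this
  have hsub : {k | ε ≤ dist (x k) L} ⊆ (Set.range q)ᶜ ∪ q '' {m | ε ≤ dist (x (q m)) L} := by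
    intro k hk
    by_cases hkq : k ∈ Set.range q
    · obtain ⟨m, rfl⟩ := hkq
      exact Or.inr ⟨m, hk, rfl⟩
    · exact Or.inl hkq
  refine lamDensity_zero_mono htop (lamDensity_zero_union htop ?_
    (lamDensity_zero_of_finite htop (hfin.image q))) hsub
  simpa using lamDensity_compl hl.lamDensity_univ hq

end LamStatConv

theorem lamStatConv_iff_subseq {X : Type*} [MetricSpace X] (l : ℕ → ℝ)
    (hl : DeltaInfty l) (x : ℕ → X) (L : X) :
    LamStatConv l x L ↔
      ∃ q : ℕ → ℕ, StrictMono q ∧ lamDensity l (Set.range q) 1 ∧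
        Tendsto (x ∘ q) atTop (𝓝 L) := by
  refine ⟨fun h => ?_, fun ⟨q, _, hq, hx⟩ => lamStatConv_of_tendsto_comp hl hq hx⟩
  obtain ⟨ε, hε, hG⟩ := h.exists_lamDensity_one hl
  have hGinf := infinite_of_lamDensity_one hl.2.2.1 hG
  have hq := Nat.nth_strictMono hGinf
  refine ⟨Nat.nth fun m => dist (x m) L < ε m, hq, by rwa [Nat.range_nth_of_infinite hGinf], ?_⟩
  rw [tendsto_iff_dist_tendsto_zero]
  exact squeeze_zero (fun _ => dist_nonneg) (fun n => (Nat.nth_mem_of_infinite hGinf n).le)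
    (hε.comp hq.tendsto_atTop)
end

section
/- Let (X, ρ) be a metric space, λ ∈ Δ∞, and x = (x_k)_{k∈ℕ} a sequence in X. If x is λ-statistically Cauchy, then for each t > 0 there is a set H_t ⊆ ℕ with λ-density d_λ(H_t) = 0 such that ρ(x_k, x_j) < t for all k, j ∉ H_t. (This is the paper's Theorem 3.8, specialized to the PM space induced by a metric, where F_{xy} = ε_{ρ(x,y)} and the strong topology is the metric topology.) -/
open Filter Topology

/-- `x` is `λ`-statistically Cauchy in the metric space `X`. -/
def LamStatCauchy {X : Type*} [MetricSpace X] (l : ℕ → ℝ) (x : ℕ → X) : Prop :=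
  ∀ η > 0, ∃ N₀ : ℕ, lamDensity l {k | η ≤ dist (x k) (x N₀)} 0

theorem lamStatCauchy_imp_exists_small_exceptional_set_general {X : Type*} [MetricSpace X]
    (l : ℕ → ℝ) (x : ℕ → X)
    (hx : LamStatCauchy l x) :
    ∀ t > 0, ∃ H : Set ℕ, lamDensity l H 0 ∧
      ∀ k ∉ H, ∀ j ∉ H, dist (x k) (x j) < t := by
  intro t ht
  obtain ⟨N₀, hN₀⟩ := hx (t / 2) (half_pos ht)
  refine ⟨{k | t / 2 ≤ dist (x k) (x N₀)}, hN₀, fun k hk j hj => ?_⟩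
  calc dist (x k) (x j) ≤ dist (x k) (x N₀) + dist (x j) (x N₀) := dist_triangle_right _ _ _
    _ < t / 2 + t / 2 := add_lt_add (not_le.mp hk) (not_le.mp hj)
    _ = t := add_halves t

theorem lamStatCauchy_imp_exists_small_exceptional_set {X : Type*} [MetricSpace X]
    (l : ℕ → ℝ) (hl : DeltaInfty l) (x : ℕ → X)
    (hx : LamStatCauchy l x) :
    ∀ t > 0, ∃ H : Set ℕ, lamDensity l H 0 ∧
      ∀ k ∉ H, ∀ j ∉ H, dist (x k) (x j) < t :=
  lamStatCauchy_imp_exists_small_exceptional_set_general l x hx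
end

section
/- Let (X, ρ) be a metric space, λ ∈ Δ∞, and let x = (x_k)_{k∈ℕ} and g = (g_k)_{k∈ℕ} be two λ-statistically Cauchy sequences in X. Then the real sequence (ρ(x_k, g_k))_{k∈ℕ} is λ-statistically Cauchy in ℝ with the usual metric. (This is the paper's Theorem 3.10, specialized to the PM space induced by a metric, where F_{xy} = ε_{ρ(x,y)} and the strong topology is the metric topology.) -/
/-!
Choose `N₁`, `N₂` witnessing the Cauchy property of `x` and `g` for `η / 4`. The exceptional
sets `A`, `B` have λ-density zero, hence so does `A ∪ B`; since the whole of `ℕ` does not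
(`I_n` has more than `λ_n - 1` elements), there is a common good index `N₀ ∉ A ∪ B`. For
`k ∉ A ∪ B` the triangle inequality through `N₁`, `N₂` gives
`|ρ(x_k, g_k) - ρ(x_{N₀}, g_{N₀})| ≤ ρ(x_k, x_{N₀}) + ρ(g_k, g_{N₀}) < η`, so the exceptional
set of the distance sequence lies in `A ∪ B`.
-/

open Filter Topology

lemma lamCount_le_of_subset_union (l : ℕ → ℝ) {M A B : Set ℕ} (h : M ⊆ A ∪ B) (n : ℕ) :
    lamCount l M n ≤ lamCount l A n + lamCount l B n := by
  classical
  unfold lamCount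
  refine (Finset.card_le_card fun k hk => ?_).trans (Finset.card_union_le _ _)
  simp only [Finset.mem_union, Finset.mem_filter] at hk ⊢
  rcases h hk.2.2 with hA | hB
  exacts [Or.inl ⟨hk.1, hk.2.1, hA⟩, Or.inr ⟨hk.1, hk.2.1, hB⟩]

lemma lamDensity_zero_of_subset_union {l : ℕ → ℝ} (hl : ∀ᶠ n in atTop, 0 ≤ l n)
    {M A B : Set ℕ} (h : M ⊆ A ∪ B) (hA : lamDensity l A 0) (hB : lamDensity l B 0) :
    lamDensity l M 0 := by
  have hAB : Tendsto (fun n => (lamCount l A n + lamCount l B n : ℝ) / l n) atTop (𝓝 0) := by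
    simpa only [add_div, add_zero] using hA.add hB
  refine squeeze_zero' ?_ ?_ hAB
  · filter_upwards [hl] with n hn using by positivity
  · filter_upwards [hl] with n hn
    gcongr
    exact_mod_cast lamCount_le_of_subset_union l h n

lemma DeltaInfty.le_self {l : ℕ → ℝ} (hl : DeltaInfty l) {n : ℕ} (hn : 1 ≤ n) : l n ≤ n := by
  induction n, hn using Nat.le_induction with
  | base => simp [hl.2.2.2.1]
  | succ m hm ih =>
    push_cast
    linarith [hl.2.2.2.2 m hm]

lemma sub_one_lt_lamCount_univ {l : ℕ → ℝ} {n : ℕ} (h0 : 0 ≤ l n) (hn : l n ≤ n) :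
    l n - 1 < lamCount l Set.univ n := by
  classical
  set f := ⌊l n⌋₊
  have hfn : f ≤ n := Nat.floor_le_of_le hn
  -- `I_n` contains the last `⌊l n⌋₊` integers up to `n`.
  have hsub : Finset.Ioc (n - f) n ⊆
      (Finset.Icc 1 n).filter fun k : ℕ => (n : ℝ) - l n + 1 ≤ k ∧ k ∈ Set.univ := by
    intro k hk
    rw [Finset.mem_Ioc] at hk
    have hk' : ((n - f : ℕ) : ℝ) + 1 ≤ k := by exact_mod_cast hk.1
    rw [Nat.cast_sub hfn] at hk'
    simp only [Finset.mem_filter, Finset.mem_Icc, Set.mem_univ, and_true]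
    exact ⟨⟨by omega, hk.2⟩, by linarith [Nat.floor_le h0]⟩
  have hcard : f ≤ lamCount l Set.univ n := by
    simpa [lamCount, Nat.card_Ioc, Nat.sub_sub_self hfn] using Finset.card_le_card hsub
  exact (Nat.sub_one_lt_floor (l n)).trans_le (by exact_mod_cast hcard)

lemma DeltaInfty.not_lamDensity_univ_zero {l : ℕ → ℝ} (hl : DeltaInfty l) :
    ¬ lamDensity l Set.univ 0 := by
  intro h
  have hlim : Tendsto (fun n => 1 - (l n)⁻¹) atTop (𝓝 1) := by
    simpa using tendsto_const_nhds.sub hl.2.2.1.inv_tendsto_atTop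
  have hle : ∀ᶠ n in atTop, 1 - (l n)⁻¹ ≤ (lamCount l Set.univ n : ℝ) / l n := by
    filter_upwards [eventually_ge_atTop 1] with n hn
    have hpos := hl.1 n hn
    rw [show 1 - (l n)⁻¹ = (l n - 1) / l n by field_simp]
    gcongr
    exact (sub_one_lt_lamCount_univ hpos.le (hl.le_self hn)).le
  linarith [le_of_tendsto_of_tendsto hlim h hle]

lemma DeltaInfty.exists_notMem_of_lamDensity_zero {l : ℕ → ℝ} (hl : DeltaInfty l) {M : Set ℕ}
    (hM : lamDensity l M 0) : ∃ N, N ∉ M := by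
  by_contra! h
  exact hl.not_lamDensity_univ_zero <|
    lamDensity_zero_of_subset_union (hl.2.2.1.eventually_ge_atTop 0)
      (fun k _ => Or.inl (h k)) hM hM

theorem dist_of_lamStatCauchy_is_lamStatCauchy {X : Type*} [MetricSpace X]
    (l : ℕ → ℝ) (hl : DeltaInfty l) (x g : ℕ → X)
    (hx : LamStatCauchy l x) (hg : LamStatCauchy l g) :
    LamStatCauchy l (fun k => dist (x k) (g k)) := by
  intro η hη
  obtain ⟨N₁, hA⟩ := hx (η / 4) (by positivity)
  obtain ⟨N₂, hB⟩ := hg (η / 4) (by positivity)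
  have hl₀ : ∀ᶠ n in atTop, 0 ≤ l n := hl.2.2.1.eventually_ge_atTop 0
  have hAB := lamDensity_zero_of_subset_union hl₀ subset_rfl hA hB
  obtain ⟨N₀, hN₀⟩ := hl.exists_notMem_of_lamDensity_zero hAB
  refine ⟨N₀, lamDensity_zero_of_subset_union hl₀ (fun k hk => ?_) hA hB⟩
  by_contra hk'
  simp only [Set.mem_union, Set.mem_ofPred_eq, not_or, not_le] at hk hk' hN₀
  linarith [dist_dist_dist_le (x k) (g k) (x N₀) (g N₀), dist_triangle_right (x k) (x N₀) (x N₁),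
    dist_triangle_right (g k) (g N₀) (g N₂)]
end
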